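/- arXiv:2406.08138 — 2 statements merged into one kernel-verified Lean document; each statement's English description precedes it below -/
import Mathlib

section
/- The function I(x,y) = (1/y²)(x² - y + ξ/2) is a first integral of the system ẋ = y - 2x² - ξ, ẏ = -2xy on the set where y ≠ 0; that is, (y - 2x² - ξ)·∂I/∂x + (-2xy)·∂I/∂y = 0 for all (x,y) with y ≠ 0. -/
/-! Since `∂I/∂x = 2x / y²` and `∂I/∂y = (y - 2x² - ξ) / y³`, the two terms of
`ẋ ∂I/∂x + ẏ ∂I/∂y` are `± 2x (y - 2x² - ξ) / y²` and cancel. -/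

theorem hasDerivAt_const_mul_sq_sub_add (c a b x : ℝ) :
    HasDerivAt (fun t : ℝ => c * (t ^ 2 - a + b)) (c * (2 * x)) x := by
  simpa using (((hasDerivAt_pow 2 x).sub_const a).add_const b).const_mul c

theorem hasDerivAt_one_div_sq {y : ℝ} (hy : y ≠ 0) :
    HasDerivAt (fun t : ℝ => 1 / t ^ 2) (-2 / y ^ 3) y := by
  simpa only [one_div] using
    ((hasDerivAt_pow 2 y).fun_inv (pow_ne_zero 2 hy)).congr_deriv (by field_simp; ring)

theorem hasDerivAt_one_div_sq_mul_sub_add (a b : ℝ) {y : ℝ} (hy : y ≠ 0) :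
    HasDerivAt (fun t : ℝ => 1 / t ^ 2 * (a - t + b)) ((y - 2 * (a + b)) / y ^ 3) y := by
  have hlin : HasDerivAt (fun t : ℝ => a - t + b) (-1) y := by
    simpa using ((hasDerivAt_id y).const_sub a).add_const b
  exact ((hasDerivAt_one_div_sq hy).fun_mul hlin).congr_deriv (by field_simp; ring)

theorem stmt_8 (ξ : ℝ) :
    ∀ x y : ℝ, y ≠ 0 →
      (y - 2*x^2 - ξ) * (deriv (fun t : ℝ => (1/y^2) * (t^2 - y + ξ/2)) x)
      + (-2*x*y) * (deriv (fun t : ℝ => (1/t^2) * (x^2 - t + ξ/2)) y) = 0 := by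
  intro x y hy
  rw [(hasDerivAt_const_mul_sq_sub_add _ y (ξ / 2) x).deriv,
    (hasDerivAt_one_div_sq_mul_sub_add (x ^ 2) (ξ / 2) hy).deriv]
  field_simp
  ring
end

section
/- Let A, B, C, D, E, n be real numbers with n = 1, and suppose y1, y2 satisfy -(y1² + y1·y2 + y2²) + (3/2)(y1 + y2) = 0 and A·y1² + B·y2² + C·y1 + D·y2 + E = 0 with A² - A·B + B² ≠ 0. Then y1 satisfies a polynomial equation of degree 4 whose leading coefficient is A² - A·B + B²; in particular there are at most 4 possible values of y1. -/
open Polynomial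

theorem stmt_18 (A B C D E n : ℝ) (hn : n = 1) (hAB : A^2 - A*B + B^2 ≠ 0) :
    ∃ a3 a2 a1 a0 : ℝ,
      (∀ y1 y2 : ℝ,
        (-(y1^2 + y1*y2 + y2^2) + (3/2)*(y1 + y2) = 0 ∧
          A*y1^2 + B*y2^2 + C*y1 + D*y2 + E = 0) →
        (A^2 - A*B + B^2)*y1^4 + a3*y1^3 + a2*y1^2 + a1*y1 + a0 = 0) ∧
      {y1 : ℝ | ∃ y2 : ℝ,
        -(y1^2 + y1*y2 + y2^2) + (3/2)*(y1 + y2) = 0 ∧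
        A*y1^2 + B*y2^2 + C*y1 + D*y2 + E = 0}.Finite ∧
      Set.ncard {y1 : ℝ | ∃ y2 : ℝ,
        -(y1^2 + y1*y2 + y2^2) + (3/2)*(y1 + y2) = 0 ∧
        A*y1^2 + B*y2^2 + C*y1 + D*y2 + E = 0} ≤ 4 := by
  set a3 : ℝ := -(B*D) - B*C - 3*B^2 - A*D + 2*A*C with ha3
  set a2 : ℝ := D^2 - C*D + C^2 - B*E + 3*B*D + (9/4)*B^2 + 2*A*E + (3/2)*A*D + (9/4)*A*B with ha2
  set a1 : ℝ := -(D*E) - (3/2)*D^2 + 2*C*E + (3/2)*C*D - (9/4)*B*D + (9/4)*B*C with ha1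
  set a0 : ℝ := E^2 + (3/2)*D*E + (9/4)*B*E with ha0
  refine ⟨a3, a2, a1, a0, ?_, ?_, ?_⟩
  · rintro y1 y2 ⟨h1, h2⟩
    have hP : y2^2 + (y1 - 3/2)*y2 + (y1^2 - (3/2)*y1) = 0 := by linarith [h1]
    -- R = Q*T + (al^2 - B*T)*P with al = D - B*(y1-3/2),
    -- T = Q - B*P - 2*al*y2 - (y1-3/2)*al
    linear_combination
      ((A*y1^2 + B*y2^2 + C*y1 + D*y2 + E)
        - B*(y2^2 + (y1 - 3/2)*y2 + (y1^2 - (3/2)*y1))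
        - 2*(D - B*(y1 - 3/2))*y2 - (y1 - 3/2)*(D - B*(y1 - 3/2))) * h2
      + ((D - B*(y1 - 3/2))^2
        - B*((A*y1^2 + B*y2^2 + C*y1 + D*y2 + E)
          - B*(y2^2 + (y1 - 3/2)*y2 + (y1^2 - (3/2)*y1))
          - 2*(D - B*(y1 - 3/2))*y2 - (y1 - 3/2)*(D - B*(y1 - 3/2)))) * hP
  all_goals {
    set S := {y1 : ℝ | ∃ y2 : ℝ,
        -(y1^2 + y1*y2 + y2^2) + (3/2)*(y1 + y2) = 0 ∧
        A*y1^2 + B*y2^2 + C*y1 + D*y2 + E = 0} with hS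
    set p : ℝ[X] := Polynomial.C (A^2 - A*B + B^2) * X^4 + Polynomial.C a3 * X^3
        + Polynomial.C a2 * X^2 + Polynomial.C a1 * X + Polynomial.C a0
      with hp
    have hc4 : p.coeff 4 = A^2 - A*B + B^2 := by
      rw [hp]
      simp only [coeff_add, coeff_C_mul, coeff_X_pow, coeff_C, coeff_X]
      norm_num
    have hpne : p ≠ 0 := by
      intro h
      rw [h] at hc4
      simp at hc4
      exact hAB hc4.symm
    have hroot : ∀ x ∈ S, p.IsRoot x := by
      rintro x ⟨y2, hx1, hx2⟩
      have hP : y2^2 + (x - 3/2)*y2 + (x^2 - (3/2)*x) = 0 := by linarith [hx1]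
      have key : (A^2 - A*B + B^2)*x^4 + a3*x^3 + a2*x^2 + a1*x + a0 = 0 := by
        linear_combination
          ((A*x^2 + B*y2^2 + C*x + D*y2 + E)
            - B*(y2^2 + (x - 3/2)*y2 + (x^2 - (3/2)*x))
            - 2*(D - B*(x - 3/2))*y2 - (x - 3/2)*(D - B*(x - 3/2))) * hx2
          + ((D - B*(x - 3/2))^2
            - B*((A*x^2 + B*y2^2 + C*x + D*y2 + E)
              - B*(y2^2 + (x - 3/2)*y2 + (x^2 - (3/2)*x))
              - 2*(D - B*(x - 3/2))*y2 - (x - 3/2)*(D - B*(x - 3/2)))) * hP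
      simp [IsRoot, hp]
      linear_combination key
    have hsub : S ⊆ {x | p.IsRoot x} := hroot
    have hfin : S.Finite := Set.Finite.subset (Polynomial.finite_setOf_isRoot hpne) hsub
    first
    | exact hfin
    | { have hsub2 : S ⊆ ↑p.roots.toFinset := by
          intro x hx
          simp [Multiset.mem_toFinset, mem_roots, hpne]
          exact hroot x hx
        have hdeg : p.natDegree ≤ 4 := by
          rw [hp]; compute_degree
        calc S.ncard ≤ (p.roots.toFinset : Set ℝ).ncard :=
              Set.ncard_le_ncard hsub2 (p.roots.toFinset : Finset ℝ).finite_toSet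
          _ = p.roots.toFinset.card := Set.ncard_coe_finset _
          _ ≤ Multiset.card p.roots := Multiset.toFinset_card_le _
          _ ≤ p.natDegree := p.card_roots' 
          _ ≤ 4 := hdeg }
  }
end
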